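/- arXiv:math/0605698 — 2 statements merged into one kernel-verified Lean document; each statement's English description precedes it below -/
import Mathlib

section
/- Let S be a regular semigroup and a ∈ S a group-bound element. Then a ∼ a·e_a, i.e., a is conjugate (under the transitive closure of primary conjugacy) to a·e_a. -/
variable {S : Type*} [Semigroup S]

/-- Primary conjugacy: `a = x*y` and `b = y*x` for some `x, y`. -/
def PConj (a b : S) : Prop := ∃ x y : S, a = x * y ∧ b = y * x

/-- Conjugacy: the transitive closure of primary conjugacy. -/
def SConj : S → S → Prop := Relation.TransGen PConj

/-- `pw a n` is `a ^ n` for `n ≥ 1` (with junk value `a` at `n = 0`). -/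
def pw (a : S) : ℕ → S
  | 0 => a
  | 1 => a
  | n + 2 => pw a (n + 1) * a

/-- An element is a group element iff it lies in some subgroup of `S`:
there is an idempotent `e` acting as identity on `a`, and an inverse of `a`
relative to `e`. -/
def IsGroupElement (a : S) : Prop :=
  ∃ e b : S, e * e = e ∧ e * a = a ∧ a * e = a ∧ a * b = e ∧ b * a = e

/-- An element is group-bound if some positive power is a group element. -/
def GroupBound (a : S) : Prop := ∃ n : ℕ, 1 ≤ n ∧ IsGroupElement (pw a n)

/-- Green's L-relation: same principal left ideal in `S¹`. -/
def LRel (a b : S) : Prop :=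
  (∃ u : WithOne S, u * (a : WithOne S) = (b : WithOne S)) ∧
  (∃ u : WithOne S, u * (b : WithOne S) = (a : WithOne S))

/-- Green's R-relation: same principal right ideal in `S¹`. -/
def RRel (a b : S) : Prop :=
  (∃ u : WithOne S, (a : WithOne S) * u = (b : WithOne S)) ∧
  (∃ u : WithOne S, (b : WithOne S) * u = (a : WithOne S))

/-- Green's H-relation. -/
def HRel (a b : S) : Prop := LRel a b ∧ RRel a b

/-- Green's D-relation. -/
def DRel (a b : S) : Prop := ∃ c : S, LRel a c ∧ RRel c b

/-!
If `a = a * y * a`, then `a = a * (y * a)` is primarily conjugate to `b = y * a * a`, and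
`a ^ (t + 1) ∈ H_e` gives `b ^ t = y * a ^ (t + 1) ∈ H_f` for `f = y * e * a`. Since `e`
commutes with `a`, `b * f = (y * e * a) * a` is primarily conjugate to `a * (y * e * a) = a * e`.
Induction on `t` reduces everything to `a ∈ H_e`, where `a = a * e` and `a * e = e * a`.
-/

/-- `x` lies in the maximal subgroup `H_e` of `S`, i.e. `x` is a unit of the monoid `e * S * e`. -/
structure MemMaxSubgroup (e x : S) : Prop where
  id_mul : e * x = x
  mul_id : x * e = x
  exists_left_inv : ∃ l, l * x = e
  exists_right_inv : ∃ r, x * r = e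

lemma WithOne.exists_coe_eq_coe_mul (s : S) (u : WithOne S) :
    ∃ z : S, (z : WithOne S) = s * u := by
  induction u using WithOne.recOneCoe with
  | one => exact ⟨s, (mul_one _).symm⟩
  | coe z => exact ⟨s * z, WithOne.coe_mul s z⟩

lemma WithOne.exists_coe_eq_mul_coe (s : S) (u : WithOne S) :
    ∃ z : S, (z : WithOne S) = u * s := by
  induction u using WithOne.recOneCoe with
  | one => exact ⟨s, (one_mul _).symm⟩
  | coe z => exact ⟨z * s, WithOne.coe_mul z s⟩

section

variable {a e x y : S}

lemma memMaxSubgroup_of_hRel (he : e * e = e) (h : HRel x e) : MemMaxSubgroup e x := by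
  obtain ⟨⟨⟨l, hl⟩, u, hu⟩, ⟨r, hr⟩, v, hv⟩ := h
  have hE : (e : WithOne S) * e = e := by rw [← WithOne.coe_mul, he]
  obtain ⟨l', hl'⟩ := WithOne.exists_coe_eq_coe_mul e l
  obtain ⟨r', hr'⟩ := WithOne.exists_coe_eq_mul_coe e r
  refine ⟨?_, ?_, ⟨l', ?_⟩, ⟨r', ?_⟩⟩ <;>
    apply WithOne.coe_injective <;> rw [WithOne.coe_mul]
  · rw [← hv, ← mul_assoc, hE]
  · rw [← hu, mul_assoc, hE]
  · rw [hl', mul_assoc, hl, hE]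
  · rw [hr', ← mul_assoc, hr, hE]

lemma MemMaxSubgroup.commute (h : MemMaxSubgroup e x) (hax : a * x = x * a) :
    e * a = a * e := by
  obtain ⟨l, hl⟩ := h.exists_left_inv
  obtain ⟨r, hr⟩ := h.exists_right_inv
  have hleft : e * a = e * (a * e) := calc
    e * a = l * (x * a) := by rw [← mul_assoc, hl]
    _ = l * (a * x * e) := by rw [mul_assoc a, h.mul_id, hax]
    _ = e * (a * e) := by rw [hax, mul_assoc x, ← mul_assoc, hl]
  have hright : e * (a * e) = a * e := calc
    e * (a * e) = e * (x * a * r) := by rw [← hax, mul_assoc, hr]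
    _ = x * a * r := by rw [← mul_assoc, ← mul_assoc, h.id_mul]
    _ = a * e := by rw [← hax, mul_assoc, hr]
  exact hleft.trans hright

lemma MemMaxSubgroup.mul_left (h : MemMaxSubgroup e x) (hyx : a * y * x = x)
    (hxy : x * y * a = x) (hea : e * a = a * e) : MemMaxSubgroup (y * e * a) (y * x) := by
  obtain ⟨l, hl⟩ := h.exists_left_inv
  obtain ⟨r, hr⟩ := h.exists_right_inv
  refine ⟨?_, ?_, ⟨y * a * l * a, ?_⟩, ⟨r * a, ?_⟩⟩
  · simp only [mul_assoc] at hyx ⊢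
    rw [hyx, h.id_mul]
  · calc y * x * (y * e * a) = y * ((x * y * a) * e) := by simp only [mul_assoc, hea]
      _ = y * x := by rw [hxy, h.mul_id]
  · calc y * a * l * a * (y * x) = y * a * (l * (a * y * x)) := by simp only [mul_assoc]
      _ = y * e * a := by rw [hyx, hl]; simp only [mul_assoc, hea]
  · rw [← mul_assoc, mul_assoc y, hr, mul_assoc]

lemma pconj_mul_of_memMaxSubgroup (h : MemMaxSubgroup e a) : PConj a (a * e) :=
  ⟨a, e, h.mul_id.symm, h.mul_id.trans h.id_mul.symm⟩

end

lemma mul_pw_succ (a : S) : ∀ n : ℕ, a * pw a (n + 1) = pw a (n + 2)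
  | 0 => rfl
  | n + 1 => by
    show a * (pw a (n + 1) * a) = pw a (n + 2) * a
    rw [← mul_assoc, mul_pw_succ a n]

section Powers

variable {a y : S}

lemma mul_mul_pw_succ (hy : a * y * a = a) (n : ℕ) : a * y * pw a (n + 1) = pw a (n + 1) := by
  cases n with
  | zero => exact hy
  | succ n => rw [← mul_pw_succ, ← mul_assoc, hy]

lemma pw_succ_mul_mul (hy : a * y * a = a) (n : ℕ) : pw a (n + 1) * y * a = pw a (n + 1) := by
  cases n with
  | zero => exact hy
  | succ n =>
    rw [show pw a (n + 2) = pw a (n + 1) * a from rfl, mul_assoc _ a y, mul_assoc _ _ a, hy]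

lemma pw_mul_mul_succ (hy : a * y * a = a) : ∀ n : ℕ, pw (y * a * a) (n + 1) = y * pw a (n + 2)
  | 0 => mul_assoc y a a
  | n + 1 => calc
      pw (y * a * a) (n + 2) = y * (pw a (n + 2) * y * a) * a := by
        rw [show pw (y * a * a) (n + 2) = pw (y * a * a) (n + 1) * (y * a * a) from rfl,
          pw_mul_mul_succ hy n]
        simp only [mul_assoc]
      _ = y * pw a (n + 3) := by rw [pw_succ_mul_mul hy, mul_assoc]; rfl

end Powers

theorem sconj_mul_of_memMaxSubgroup (hreg : ∀ x : S, ∃ y : S, x = x * y * x) :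
    ∀ (n : ℕ) {a e : S}, MemMaxSubgroup e (pw a n) → SConj a (a * e)
  | 0, _, _, h | 1, _, _, h => .single (pconj_mul_of_memMaxSubgroup h)
  | n + 2, a, e, h => by
    obtain ⟨y, hy⟩ := hreg a
    replace hy := hy.symm
    have hea : e * a = a * e := h.commute (mul_pw_succ a (n + 1))
    have hb : MemMaxSubgroup (y * e * a) (pw (y * a * a) (n + 1)) := by
      rw [pw_mul_mul_succ hy]
      exact h.mul_left (mul_mul_pw_succ hy _) (pw_succ_mul_mul hy _) hea
    have hyea : a * (y * e * a) = a * e := by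
      rw [mul_assoc y, hea, ← mul_assoc, ← mul_assoc, hy]
    refine .head ⟨a, y * a, by rw [← mul_assoc, hy], rfl⟩
      ((sconj_mul_of_memMaxSubgroup hreg (n + 1) hb).tail ⟨y * e * a, a, ?_, hyea.symm⟩)
    calc y * a * a * (y * e * a) = y * (a * (e * a)) := by
          rw [mul_assoc (y * a), hyea, mul_assoc, ← hea]
      _ = y * e * a * a := by rw [← mul_assoc a, ← hea]; simp only [mul_assoc]

theorem sconj_mul_idempotent_of_regular_general
    (hreg : ∀ x : S, ∃ y : S, x = x * y * x)
    (a e : S) (t : ℕ)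
    (he : e * e = e) (hH : HRel (pw a t) e) :
    SConj a (a * e) :=
  sconj_mul_of_memMaxSubgroup hreg t (memMaxSubgroup_of_hRel he hH)

theorem sconj_mul_idempotent_of_regular
    (hreg : ∀ x : S, ∃ y : S, x = x * y * x)
    (a e : S) (t : ℕ) (ht : 1 ≤ t)
    (he : e * e = e) (hH : HRel (pw a t) e) :
    SConj a (a * e) :=
  sconj_mul_idempotent_of_regular_general hreg a e t he hH
end

section
/- Let S be a regular semigroup with zero element 0. Then any two nilpotent elements of S are conjugate, and if a ∼ b with a nilpotent, then b is nilpotent. -/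
variable {S : Type*} [Semigroup S]

/-! If `a = a * b * a` then `a = (a * b) * a` is primarily conjugate to `c = a * (a * b)`, and
`c ^ k = a ^ (k + 1) * b`, so a nilpotent `a` of index `n + 1` is conjugate to a nilpotent `c` of
index `n`. Descending to index `1` reaches `0`, so every nilpotent is conjugate to `0`. Conversely,
`(y * x) ^ (k + 1) = y * (x * y) ^ k * x`, so primary conjugacy preserves nilpotency. -/

def IsNilpotentWrt (z a : S) : Prop := ∃ n : ℕ, 1 ≤ n ∧ pw a n = z

lemma pw_one (a : S) : pw a 1 = a := rfl

lemma pw_succ (a : S) {n : ℕ} (hn : 1 ≤ n) : pw a (n + 1) = pw a n * a := by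
  obtain ⟨m, rfl⟩ := Nat.exists_eq_add_of_le' hn
  rfl

lemma mul_pw (a : S) {n : ℕ} (hn : 1 ≤ n) : a * pw a n = pw a (n + 1) := by
  induction n, hn using Nat.le_induction with
  | base => rfl
  | succ n hn ih => rw [pw_succ a hn, ← mul_assoc, ih, ← pw_succ a (by omega)]

lemma pw_mul_comm_succ (x y : S) {k : ℕ} (hk : 1 ≤ k) :
    pw (y * x) (k + 1) = y * pw (x * y) k * x := by
  induction k, hk using Nat.le_induction with
  | base => simp only [pw_one, pw_succ _ le_rfl, mul_assoc]
  | succ k hk ih =>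
    rw [pw_succ _ (by omega), ih, pw_succ _ hk]
    simp only [mul_assoc]

lemma pw_mul_mul_of_mul_mul_self {a b : S} (hab : a * b * a = a) {k : ℕ} (hk : 1 ≤ k) :
    pw (a * (a * b)) k = pw a (k + 1) * b := by
  obtain ⟨m, rfl⟩ := Nat.exists_eq_add_of_le' hk
  rcases Nat.eq_zero_or_pos m with rfl | hm
  · exact (mul_assoc a a b).symm
  · rw [pw_mul_comm_succ (a * b) a hm, hab, ← mul_assoc, mul_pw a hm,
      pw_succ a (Nat.le_add_left 1 m)]

lemma PConj.symm {a b : S} (h : PConj a b) : PConj b a :=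
  let ⟨x, y, ha, hb⟩ := h
  ⟨y, x, hb, ha⟩

lemma SConj.symm {a b : S} (h : SConj a b) : SConj b a := by
  induction h with
  | single h => exact .single h.symm
  | tail _ h ih => exact .head h.symm ih

section Zero

variable {z : S} (hz : ∀ x : S, z * x = z ∧ x * z = z)
include hz

lemma PConj.isNilpotentWrt {a b : S} (h : PConj a b) (ha : IsNilpotentWrt z a) :
    IsNilpotentWrt z b := by
  obtain ⟨x, y, rfl, rfl⟩ := h
  obtain ⟨n, hn, hxy⟩ := ha
  exact ⟨n + 1, by omega, by rw [pw_mul_comm_succ x y hn, hxy, (hz y).2, (hz x).1]⟩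

lemma SConj.isNilpotentWrt {a b : S} (h : SConj a b) (ha : IsNilpotentWrt z a) :
    IsNilpotentWrt z b := by
  induction h with
  | single h => exact h.isNilpotentWrt hz ha
  | tail _ h ih => exact h.isNilpotentWrt hz ih

lemma sConj_zero_of_pw_eq_zero (hreg : ∀ x : S, ∃ y : S, x = x * y * x) {n : ℕ}
    (hn : 1 ≤ n) :
    ∀ a : S, pw a n = z → SConj a z := by
  induction n, hn using Nat.le_induction with
  | base =>
    rintro a rfl
    exact Relation.TransGen.single ⟨a, a, (hz a).1.symm, (hz a).1.symm⟩
  | succ n hn ih =>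
    intro a ha
    obtain ⟨b, hb⟩ := hreg a
    have hpc : PConj a (a * (a * b)) := ⟨a * b, a, hb, rfl⟩
    have hc : pw (a * (a * b)) n = z := by
      rw [pw_mul_mul_of_mul_mul_self hb.symm hn, ha, (hz b).1]
    exact Relation.TransGen.head hpc (ih _ hc)

end Zero

theorem nilpotents_conjugate_in_regular_semigroup_with_zero
    (hreg : ∀ x : S, ∃ y : S, x = x * y * x)
    (z : S) (hz : ∀ x : S, z * x = z ∧ x * z = z) :
    (∀ a b : S, (∃ n : ℕ, 1 ≤ n ∧ pw a n = z) → (∃ n : ℕ, 1 ≤ n ∧ pw b n = z) →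
      SConj a b) ∧
    (∀ a b : S, SConj a b → (∃ n : ℕ, 1 ≤ n ∧ pw a n = z) →
      (∃ n : ℕ, 1 ≤ n ∧ pw b n = z)) := by
  refine ⟨?_, fun a b hab ha => hab.isNilpotentWrt hz ha⟩
  rintro a b ⟨n, hn, ha⟩ ⟨m, hm, hb⟩
  exact (sConj_zero_of_pw_eq_zero hz hreg hn a ha).trans
    (sConj_zero_of_pw_eq_zero hz hreg hm b hb).symm
end
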